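/- In a trim lattice L, the collection of sets of downward labels equals the collection of sets of upward labels: { D^γ(x) : x ∈ L } = { U^γ(y) : y ∈ L }. Consequently rowmotion row^γ(x) := the unique y with D^γ(x) = U^γ(y) is a well-defined bijection of L. -/

import Mathlib

/-- An element `x` of a lattice is *left modular* if `(y ⊔ x) ⊓ z = y ⊔ (x ⊓ z)`
for all `y ≤ z`. -/
def LeftModular {L : Type*} [Lattice L] (x : L) : Prop :=
  ∀ y z : L, y ≤ z → (y ⊔ x) ⊓ z = y ⊔ (x ⊓ z)

/-- The data of an extremal lattice of length `n` together with a fixed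
maximal-length chain `x₀ ⋖ ⋯ ⋖ xₙ` and the induced numberings of the
join-irreducibles `j₁, …, jₙ` and meet-irreducibles `m₁, …, mₙ`. -/
structure ExtremalChainData (L : Type*) [Lattice L] [Fintype L] [BoundedOrder L]
    (n : ℕ) where
  x : Fin (n + 1) → L
  x_strictMono : StrictMono x
  x_bot : x 0 = ⊥
  x_top : x (Fin.last n) = ⊤
  maxlen : ∀ (m : ℕ) (c : Fin (m + 1) → L), StrictMono c → m ≤ n
  j : Fin n → L
  m : Fin n → L
  j_irr : ∀ i, SupIrred (j i)
  m_irr : ∀ i, InfIrred (m i)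
  j_inj : Function.Injective j
  m_inj : Function.Injective m
  j_surj : ∀ a : L, SupIrred a → a ∈ Set.range j
  m_surj : ∀ a : L, InfIrred a → a ∈ Set.range m
  x_eq_sup : ∀ i : Fin (n + 1),
    x i = (Finset.univ.filter fun k : Fin n => (k : ℕ) < (i : ℕ)).sup j
  x_eq_inf : ∀ i : Fin (n + 1),
    x i = (Finset.univ.filter fun k : Fin n => (i : ℕ) ≤ (k : ℕ)).inf m

namespace ExtremalChainData

variable {L : Type*} [Lattice L] [Fintype L] [BoundedOrder L] {n : ℕ}

/-- `x_J`: the set of indices of join-irreducibles lying below `a`. -/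
def setJ (D : ExtremalChainData L n) (a : L) : Set (Fin n) := {i | D.j i ≤ a}

/-- `x_M`: the set of indices of meet-irreducibles lying above `a`. -/
def setM (D : ExtremalChainData L n) (a : L) : Set (Fin n) := {i | a ≤ D.m i}

/-- The Galois graph: a directed edge `i → k` when `jᵢ ≰ m_k` and `i ≠ k`. -/
def galoisEdge (D : ExtremalChainData L n) (i k : Fin n) : Prop :=
  ¬ D.j i ≤ D.m k ∧ i ≠ k

/-- The left modular labelling: `i` is the label of the cover `y ⋖ z` iff `i` is
minimal with `y ⊔ (xᵢ ⊓ z) = z`. -/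
def IsLabel (D : ExtremalChainData L n) (y z : L) (i : Fin n) : Prop :=
  y ⊔ (D.x i.succ ⊓ z) = z ∧ ∀ k : Fin n, y ⊔ (D.x k.succ ⊓ z) = z → i ≤ k

open scoped Classical in
/-- `D^γ(a)`: the set of labels of cover relations below `a`. -/
noncomputable def downLabels (D : ExtremalChainData L n) (a : L) : Finset (Fin n) :=
  Finset.univ.filter fun i => ∃ y, y ⋖ a ∧ D.IsLabel y a i

open scoped Classical in
/-- `U^γ(a)`: the set of labels of cover relations above `a`. -/
noncomputable def upLabels (D : ExtremalChainData L n) (a : L) : Finset (Fin n) :=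
  Finset.univ.filter fun i => ∃ z, a ⋖ z ∧ D.IsLabel a z i

/-- The fixed chain consists of left modular elements, i.e. the lattice is trim. -/
def IsTrim (D : ExtremalChainData L n) : Prop := ∀ i, LeftModular (D.x i)

end ExtremalChainData

/-!
For a cover `y ⋖ z` with label `t`, left modularity gives `y ⊔ j_t = z` and `z ⊓ m_t = y`, so
`x = ⋁_{t ∈ D(x)} j_t = ⋀_{t ∈ U(x)} m_t` and both `D` and `U` are injective. Call `S`
independent if `j_s ≤ m_t` whenever `s ≠ t` lie in `S`, i.e. `S` spans no edge of the Galois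
graph. By induction on `|L|`, `U(⊥)` is independent and `D(⋁_{s ∈ S} j_s) = S` for every
independent `S`: an interval `[⊥, z]` of a trim lattice is trim, with join-irreducibles the
`j_t ≤ z` and with the labels of `L`, and the facts about `D(⊤)` needed along the way are the
facts about `U(⊥)` in the order dual, where the chain is reversed and `j`, `m` and `D`, `U`
trade places. Dually `U(⋀_{t ∈ S} m_t) = S`. Since every `D(x)` is independent (apply the
above to `[⊥, x]`), `x ↦ ⋀_{t ∈ D(x)} m_t` is an injective, hence bijective, self-map of `L`
carrying `D` to `U`.
-/

open Finset OrderDual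
open scoped Classical

theorem length_le_card_of_separating {α ι : Type*} [Preorder α] {m : ℕ}
    {c : Fin (m + 1) → α} (hc : Monotone c) (s : Finset ι) (P : ι → α → Prop)
    (hP : ∀ t a b, P t a → a ≤ b → P t b)
    (h : ∀ i : Fin m, ∃ t ∈ s, P t (c i.succ) ∧ ¬ P t (c i.castSucc)) : m ≤ s.card := by
  choose g hgs hg hg' using h
  have hne (i i' : Fin m) (hlt : i < i') : g i ≠ g i' := fun he =>
    hg' i' (hP _ _ _ (he ▸ hg i) (hc (Fin.succ_le_castSucc_iff.2 hlt)))
  have hinj : Function.Injective g := fun i i' he => by_contra fun hii' =>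
    (lt_or_gt_of_ne hii').elim (hne i i' · he) (hne i' i · he.symm)
  calc m = (univ : Finset (Fin m)).card := by simp
    _ ≤ s.card := card_le_card_of_injOn g (fun i _ => hgs i) hinj.injOn

theorem exists_infIrred_le_not_le {α : Type*} [SemilatticeInf α] [OrderTop α] [WellFoundedGT α]
    {a b : α} (h : ¬ b ≤ a) : ∃ w, InfIrred w ∧ a ≤ w ∧ ¬ b ≤ w := by
  obtain ⟨s, rfl, hs⟩ := exists_infIrred_decomposition a
  by_contra! H
  exact h (Finset.le_inf fun w hw => H w (hs hw) (Finset.inf_le hw))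

theorem LeftModular.toDual {L : Type*} [Lattice L] {x : L} (hx : LeftModular x) :
    LeftModular (toDual x) :=
  fun y z hyz => by
    have := hx (ofDual z) (ofDual y) hyz
    rw [sup_comm, inf_comm] at this ⊢
    exact this.symm

theorem LeftModular.inf_Iic {L : Type*} [Lattice L] {x : L} (hx : LeftModular x)
    (z : L) : LeftModular (⟨z ⊓ x, inf_le_left⟩ : Set.Iic z) := by
  intro a b hab
  have ha : (a : L) ≤ z := a.2
  have hb : (b : L) ≤ z := b.2
  apply Subtype.ext
  change ((a : L) ⊔ z ⊓ x) ⊓ (b : L) = (a : L) ⊔ z ⊓ x ⊓ (b : L)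
  rw [inf_comm z x, ← hx _ _ ha, inf_assoc, inf_eq_right.2 hb, hx _ _ hab, inf_assoc,
    inf_eq_right.2 hb]

theorem card_Iic_lt_card {L : Type*} [PartialOrder L] [OrderTop L] [Fintype L] {z : L}
    (hz : z ≠ ⊤) : Fintype.card (Set.Iic z) < Fintype.card L :=
  Fintype.card_lt_of_injective_of_notMem _ Subtype.val_injective (b := ⊤)
    fun ⟨w, hw⟩ => hz (top_le_iff.1 (hw ▸ w.2))

namespace Set.Iic

variable {L : Type*} [Lattice L] {z : L}

theorem coe_covBy_coe {α : Type*} [Preorder α] {z : α} {a b : Set.Iic z} :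
    (a : α) ⋖ b ↔ a ⋖ b :=
  Set.OrdConnected.apply_covBy_apply_iff (OrderEmbedding.subtype fun c => c ≤ z)
    (by simpa only [OrderEmbedding.coe_subtype, Subtype.range_coe_subtype]
      using! Set.ordConnected_Iic)

theorem supIrred_coe_iff [OrderBot L] {a : Set.Iic z} : SupIrred (a : L) ↔ SupIrred a := by
  simp only [SupIrred, isMin_iff_eq_bot, ← Subtype.coe_inj, Set.Iic.coe_bot]
  refine and_congr_right fun _ => ⟨fun h b c hbc => h hbc, fun h b c hbc => ?_⟩
  have hb : b ≤ z := le_sup_left.trans (hbc.le.trans a.2)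
  have hc : c ≤ z := le_sup_right.trans (hbc.le.trans a.2)
  exact h (b := ⟨b, hb⟩) (c := ⟨c, hc⟩) hbc

theorem coe_finset_sup [OrderBot L] {ι : Type*} (s : Finset ι) (f : ι → Set.Iic z) :
    ((s.sup f : Set.Iic z) : L) = s.sup fun i => (f i : L) :=
  Finset.apply_sup_eq_sup_comp _ (fun _ _ => rfl) rfl

theorem coe_finset_inf [OrderTop L] {ι : Type*} (s : Finset ι) (f : ι → Set.Iic z) :
    ((s.inf f : Set.Iic z) : L) = z ⊓ s.inf fun i => (f i : L) := by
  induction s using Finset.cons_induction with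
  | empty => simp
  | cons i s _ ih =>
    rw [Finset.inf_cons, Finset.inf_cons, Set.Iic.coe_inf, ih, inf_left_comm,
      inf_eq_right.2 ((f i).2.trans' inf_le_left)]

end Set.Iic

namespace ExtremalChainData

variable {L : Type*} [Lattice L] [Fintype L] [BoundedOrder L] {n : ℕ}

section Chain

variable (D : ExtremalChainData L n)

def dual : ExtremalChainData Lᵒᵈ n where
  x i := toDual (D.x i.rev)
  x_strictMono _ _ h := D.x_strictMono (Fin.rev_lt_rev.2 h)
  x_bot := by simp [D.x_top]
  x_top := by simp [D.x_bot]
  maxlen m c hc := D.maxlen m (fun i => ofDual (c i.rev)) fun _ _ h => hc (Fin.rev_lt_rev.2 h)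
  j k := toDual (D.m k.rev)
  m k := toDual (D.j k.rev)
  j_irr _ := (D.m_irr _).dual
  m_irr _ := (D.j_irr _).dual
  j_inj _ _ h := Fin.rev_injective (D.m_inj (toDual.injective h))
  m_inj _ _ h := Fin.rev_injective (D.j_inj (toDual.injective h))
  j_surj a ha := by
    obtain ⟨k, hk⟩ := D.m_surj _ ha.ofDual
    exact ⟨k.rev, by simp [hk]⟩
  m_surj a ha := by
    obtain ⟨k, hk⟩ := D.j_surj _ ha.ofDual
    exact ⟨k.rev, by simp [hk]⟩
  x_eq_sup i := by
    have : ({k | (i.rev : ℕ) ≤ k} : Finset (Fin n)) =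
        ({k | (k : ℕ) < i} : Finset (Fin n)).map Fin.revPerm.toEmbedding := by
      ext k
      simp only [mem_filter, mem_univ, true_and, mem_map_equiv, Fin.revPerm_symm,
        Fin.revPerm_apply, Fin.val_rev]
      omega
    rw [D.x_eq_inf, Finset.toDual_inf, this, sup_map]
    rfl
  x_eq_inf i := by
    have : ({k | (k : ℕ) < i.rev} : Finset (Fin n)) =
        ({k | (i : ℕ) ≤ k} : Finset (Fin n)).map Fin.revPerm.toEmbedding := by
      ext k
      simp only [mem_filter, mem_univ, true_and, mem_map_equiv, Fin.revPerm_symm,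
        Fin.revPerm_apply, Fin.val_rev]
      omega
    rw [D.x_eq_sup, Finset.toDual_sup, this, inf_map]
    rfl

@[simp] theorem dual_x (i : Fin (n + 1)) : D.dual.x i = toDual (D.x i.rev) := rfl

@[simp] theorem dual_j (k : Fin n) : D.dual.j k = toDual (D.m k.rev) := rfl

@[simp] theorem dual_m (k : Fin n) : D.dual.m k = toDual (D.j k.rev) := rfl

theorem j_le_x {k : Fin n} {i : Fin (n + 1)} (h : (k : ℕ) < i) : D.j k ≤ D.x i := by
  rw [D.x_eq_sup]
  exact Finset.le_sup (by simpa using h)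

theorem x_le_m {k : Fin n} {i : Fin (n + 1)} (h : (i : ℕ) ≤ k) : D.x i ≤ D.m k := by
  rw [D.x_eq_inf]
  exact Finset.inf_le (by simpa using h)

theorem x_succ_eq_sup (k : Fin n) : D.x k.succ = D.x k.castSucc ⊔ D.j k := by
  rw [D.x_eq_sup, D.x_eq_sup, sup_comm, ← sup_insert]
  congr 1
  ext t
  simp only [mem_filter, mem_univ, true_and, mem_insert, Fin.ext_iff, Fin.val_succ,
    Fin.val_castSucc]
  omega

theorem x_castSucc_eq_inf (k : Fin n) : D.x k.castSucc = D.x k.succ ⊓ D.m k := by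
  simpa [Fin.rev_succ, Fin.rev_castSucc] using congrArg ofDual (D.dual.x_succ_eq_sup k.rev)

theorem j_not_le_x {k : Fin n} {i : Fin (n + 1)} (h : (i : ℕ) ≤ k) : ¬ D.j k ≤ D.x i := by
  intro hk
  refine (D.x_strictMono k.castSucc_lt_succ).not_ge ?_
  rw [x_succ_eq_sup]
  exact sup_le le_rfl (hk.trans (D.x_strictMono.monotone (by simpa [Fin.le_def] using h)))

theorem j_le_m_of_lt {k k' : Fin n} (h : k < k') : D.j k ≤ D.m k' :=
  (D.j_le_x (i := k.succ) (by simp)).trans (D.x_le_m (by simpa using h))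

theorem j_not_le_m (k : Fin n) : ¬ D.j k ≤ D.m k := fun h =>
  D.j_not_le_x (i := k.castSucc) le_rfl (D.x_castSucc_eq_inf k ▸ le_inf (D.j_le_x (by simp)) h)

theorem x_castSucc_covBy (k : Fin n) : D.x k.castSucc ⋖ D.x k.succ := by
  refine ⟨D.x_strictMono k.castSucc_lt_succ, fun c h₁ h₂ => ?_⟩
  have : n + 1 ≤ n := D.maxlen (n + 1) _
    (LTSeries.strictMono ((LTSeries.mk n D.x D.x_strictMono).insertNth k c h₁ h₂))
  omega

noncomputable def jBelow (a : L) : Finset (Fin n) := (D.setJ a).toFinset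

@[simp] theorem mem_jBelow {a : L} {t : Fin n} : t ∈ D.jBelow a ↔ D.j t ≤ a := by
  rw [jBelow, Set.mem_toFinset]
  rfl

theorem sup_jBelow (a : L) : (D.jBelow a).sup D.j = a := by
  refine le_antisymm (Finset.sup_le fun t ht => D.mem_jBelow.1 ht) ?_
  obtain ⟨s, rfl, hs⟩ := exists_supIrred_decomposition a
  refine Finset.sup_le fun b hb => ?_
  obtain ⟨t, rfl⟩ := D.j_surj b (hs hb)
  exact Finset.le_sup (D.mem_jBelow.2 (Finset.le_sup (f := id) hb))

theorem exists_j_le_not_le {a b : L} (h : ¬ b ≤ a) : ∃ t, D.j t ≤ b ∧ ¬ D.j t ≤ a := by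
  by_contra! H
  exact h (D.sup_jBelow b ▸ Finset.sup_le fun t ht => H t (D.mem_jBelow.1 ht))

theorem j_le_of_sup_eq {u : L} {k : Fin n} (h : u ⊔ D.x k.castSucc = D.x k.succ) :
    D.j k ≤ u := by
  by_contra hk
  have hu : u ≤ D.x k.castSucc := by
    rw [← D.sup_jBelow u]
    refine Finset.sup_le fun t ht => D.j_le_x ?_
    have htu := D.mem_jBelow.1 ht
    have hle : (t : ℕ) ≤ k := by
      by_contra h'
      exact D.j_not_le_x (i := k.succ) (by simp only [Fin.val_succ]; omega)
        (htu.trans (h ▸ le_sup_left))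
    have hne : (t : ℕ) ≠ k := fun h' => hk (Fin.ext h' ▸ htu)
    simp only [Fin.val_castSucc]
    omega
  rw [sup_eq_right.2 hu] at h
  exact (D.x_strictMono k.castSucc_lt_succ).ne h

end Chain

section Labels

variable {D : ExtremalChainData L n} {y z : L} {t : Fin n}

theorem IsTrim.dual (hD : D.IsTrim) : D.dual.IsTrim :=
  fun _ => (hD _).toDual

theorem mem_downLabels : t ∈ D.downLabels z ↔ ∃ y, y ⋖ z ∧ D.IsLabel y z t := by
  simp [downLabels]

theorem mem_upLabels : t ∈ D.upLabels y ↔ ∃ z, y ⋖ z ∧ D.IsLabel y z t := by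
  simp [upLabels]

theorem exists_isLabel (h : y ⋖ z) : ∃ t, D.IsLabel y z t := by
  obtain ⟨k, hk⟩ : ∃ k : Fin n, k.succ = Fin.last n := by
    rcases n with _ | m
    · have hbot : (⊥ : L) = ⊤ := D.x_bot.symm.trans D.x_top
      exact absurd h.lt (not_lt_of_ge (le_top.trans (hbot ▸ bot_le)))
    · exact ⟨Fin.last m, rfl⟩
  obtain ⟨t, ht, hmin⟩ :=
    (univ.filter fun k => y ⊔ (D.x k.succ ⊓ z) = z).exists_min_image id
      ⟨k, by simp [hk, D.x_top, h.le]⟩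
  exact ⟨t, (mem_filter.1 ht).2, fun k hk => hmin k (by simp [hk])⟩

variable (hD : D.IsTrim)
include hD

theorem sup_x_inf_eq_iff (hyz : y ≤ z) (i : Fin (n + 1)) :
    y ⊔ (D.x i ⊓ z) = z ↔ z ≤ y ⊔ D.x i := by
  rw [← hD i y z hyz, inf_eq_right]

theorem le_sup_inf_x_iff {a b : L} (ha : a ≤ z) (hb : b ≤ z) (i : Fin (n + 1)) :
    b ≤ a ⊔ z ⊓ D.x i ↔ b ≤ a ⊔ D.x i := by
  rw [inf_comm, ← hD i a z ha, le_inf_iff, and_iff_left hb]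

theorem le_sup_x_iff (h : y ⋖ z) (i : Fin (n + 1)) :
    z ≤ y ⊔ D.x i ↔ ¬ D.x i ⊓ z ≤ y := by
  rw [← sup_x_inf_eq_iff hD h.le i]
  refine ⟨fun he hle => h.ne (sup_eq_left.2 hle ▸ he), fun hn => ?_⟩
  exact (h.eq_or_eq le_sup_left (sup_le h.le inf_le_right)).resolve_left
    fun he => hn (he ▸ le_sup_right)

theorem isLabel_iff (h : y ⋖ z) (t : Fin n) :
    D.IsLabel y z t ↔ z ≤ y ⊔ D.x t.succ ∧ ¬ z ≤ y ⊔ D.x t.castSucc := by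
  simp only [IsLabel, sup_x_inf_eq_iff hD h.le]
  refine and_congr_right fun _ => ⟨fun hmin hle => ?_, fun hn k hk => ?_⟩
  · obtain h0 | hpos := Nat.eq_zero_or_pos (t : ℕ)
    · rw [show t.castSucc = 0 from Fin.ext h0, D.x_bot, sup_bot_eq] at hle
      exact h.lt.not_ge hle
    · have hk : (⟨t - 1, by omega⟩ : Fin n).succ = t.castSucc := by
        ext
        simp only [Fin.succ_mk, Fin.val_castSucc]
        omega
      have := Fin.le_def.1 (hmin _ (hk ▸ hle))
      simp only at this
      omega
  · by_contra! hlt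
    have hkt : k.succ ≤ t.castSucc := by
      rw [Fin.le_def, Fin.val_succ, Fin.val_castSucc]
      exact hlt
    exact hn (hk.trans (sup_le_sup_left (D.x_strictMono.monotone hkt) _))

theorem isLabel_iff_inf (h : y ⋖ z) (t : Fin n) :
    D.IsLabel y z t ↔ D.x t.castSucc ⊓ z ≤ y ∧ ¬ D.x t.succ ⊓ z ≤ y := by
  rw [isLabel_iff hD h, le_sup_x_iff hD h, le_sup_x_iff hD h, not_not, and_comm]

theorem isLabel_dual_iff (h : y ⋖ z) (t : Fin n) :
    D.dual.IsLabel (toDual z) (toDual y) t ↔ D.IsLabel y z t.rev := by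
  rw [isLabel_iff hD.dual h.toDual, isLabel_iff_inf hD h]
  show z ⊓ D.x t.succ.rev ≤ y ∧ ¬ z ⊓ D.x t.castSucc.rev ≤ y ↔ _
  rw [Fin.rev_succ, Fin.rev_castSucc, inf_comm z, inf_comm z]

theorem IsLabel.dual (h : y ⋖ z) (hl : D.IsLabel y z t) :
    D.dual.IsLabel (toDual z) (toDual y) t.rev :=
  (isLabel_dual_iff hD h t.rev).2 (by rwa [Fin.rev_rev])

theorem mem_dual_downLabels {a : L} :
    t ∈ D.dual.downLabels (toDual a) ↔ t.rev ∈ D.upLabels a := by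
  rw [mem_downLabels, mem_upLabels]
  constructor
  · rintro ⟨y, hy, hl⟩
    have hy' := (toDual_covBy_toDual_iff (a := a) (b := ofDual y)).1 hy
    exact ⟨ofDual y, hy', (isLabel_dual_iff hD hy' t).1 hl⟩
  · rintro ⟨z, hz, hl⟩
    exact ⟨toDual z, hz.toDual, (isLabel_dual_iff hD hz t).2 hl⟩

theorem mem_dual_upLabels {a : L} :
    t ∈ D.dual.upLabels (toDual a) ↔ t.rev ∈ D.downLabels a := by
  rw [mem_upLabels, mem_downLabels]
  constructor
  · rintro ⟨z, hz, hl⟩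
    have hz' := (toDual_covBy_toDual_iff (a := ofDual z) (b := a)).1 hz
    exact ⟨ofDual z, hz', (isLabel_dual_iff hD hz' t).1 hl⟩
  · rintro ⟨y, hy, hl⟩
    exact ⟨toDual y, hy.toDual, (isLabel_dual_iff hD hy t).2 hl⟩

theorem dual_downLabels (a : L) :
    D.dual.downLabels (toDual a) = (D.upLabels a).map Fin.revPerm.toEmbedding := by
  ext t
  simp [mem_map_equiv, mem_dual_downLabels hD]

theorem dual_upLabels (a : L) :
    D.dual.upLabels (toDual a) = (D.downLabels a).map Fin.revPerm.toEmbedding := by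
  ext t
  simp [mem_map_equiv, mem_dual_upLabels hD]

theorem j_le_of_isLabel (h : y ⋖ z) (hl : D.IsLabel y z t) : D.j t ≤ z := by
  rw [isLabel_iff_inf hD h] at hl
  have hne : ¬ D.x t.succ ⊓ z ≤ D.x t.castSucc := fun hle =>
    hl.2 ((le_inf hle inf_le_right).trans hl.1)
  have hsup : D.x t.succ ⊓ z ⊔ D.x t.castSucc = D.x t.succ :=
    ((D.x_castSucc_covBy t).eq_or_eq le_sup_right (sup_le inf_le_left (D.x_castSucc_covBy t).le)
      ).resolve_left fun he => hne (he ▸ le_sup_left)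
  exact (D.j_le_of_sup_eq hsup).trans inf_le_right

theorem j_not_le_of_isLabel (h : y ⋖ z) (hl : D.IsLabel y z t) : ¬ D.j t ≤ y := by
  rw [isLabel_iff hD h] at hl
  refine fun hj => hl.2 (hl.1.trans (sup_le le_sup_left ?_))
  rw [x_succ_eq_sup]
  exact sup_le le_sup_right (hj.trans le_sup_left)

theorem sup_j_eq_of_isLabel (h : y ⋖ z) (hl : D.IsLabel y z t) : y ⊔ D.j t = z :=
  (h.eq_or_eq le_sup_left (sup_le h.le (j_le_of_isLabel hD h hl))).resolve_left
    fun he => j_not_le_of_isLabel hD h hl (he ▸ le_sup_right)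

theorem le_m_of_isLabel (h : y ⋖ z) (hl : D.IsLabel y z t) : y ≤ D.m t := by
  simpa using j_le_of_isLabel hD.dual h.toDual (hl.dual hD h)

theorem inf_m_eq_of_isLabel (h : y ⋖ z) (hl : D.IsLabel y z t) : z ⊓ D.m t = y := by
  simpa using congrArg ofDual (sup_j_eq_of_isLabel hD.dual h.toDual (hl.dual hD h))

theorem le_of_j_le_of_isLabel (h : y ⋖ z) (hl : D.IsLabel y z t) {k : Fin n}
    (hkz : D.j k ≤ z) (hky : ¬ D.j k ≤ y) : t ≤ k := by
  by_contra! hlt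
  exact hky (inf_m_eq_of_isLabel hD h hl ▸ le_inf hkz (D.j_le_m_of_lt hlt))

theorem j_le_of_mem_downLabels {a : L} {t : Fin n} (ht : t ∈ D.downLabels a) : D.j t ≤ a := by
  obtain ⟨y, hy, hl⟩ := mem_downLabels.1 ht
  exact j_le_of_isLabel hD hy hl

theorem sup_downLabels (a : L) : (D.downLabels a).sup D.j = a := by
  have hle : (D.downLabels a).sup D.j ≤ a :=
    Finset.sup_le fun _ ht => j_le_of_mem_downLabels hD ht
  refine hle.lt_or_eq.resolve_left fun hlt => ?_
  obtain ⟨y, hy, hya⟩ := exists_le_covBy_of_lt hlt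
  obtain ⟨t, ht⟩ := exists_isLabel hya
  exact j_not_le_of_isLabel hD hya ht ((Finset.le_sup (mem_downLabels.2 ⟨y, hya, ht⟩)).trans hy)

theorem inf_upLabels (a : L) : (D.upLabels a).inf D.m = a := by
  have := sup_downLabels hD.dual (toDual a)
  rw [dual_downLabels hD, sup_map] at this
  apply toDual.injective
  rw [Finset.toDual_inf, ← this]
  congr 1
  ext t
  simp

theorem downLabels_injective : Function.Injective D.downLabels := fun a b h => by
  rw [← sup_downLabels hD a, h, sup_downLabels hD b]

theorem upLabels_injective : Function.Injective D.upLabels := fun a b h => by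
  rw [← inf_upLabels hD a, h, inf_upLabels hD b]

theorem mem_downLabels_m_sup_j (t : Fin n) : t ∈ D.downLabels (D.m t ⊔ D.j t) := by
  obtain ⟨c, hc, -⟩ := exists_covBy_le_of_lt (D.m_irr t).ne_top.lt_top
  obtain ⟨s, hs⟩ := exists_isLabel hc
  obtain rfl : s = t := D.m_inj <|
    ((D.m_irr t).2 (inf_m_eq_of_isLabel hD hc hs)).resolve_left hc.lt.ne'
  rw [sup_j_eq_of_isLabel hD hc hs]
  exact mem_downLabels.2 ⟨_, hc, hs⟩

/-- If `j_t ≰ m_0`, every `m_s ≥ j_t` has `s > 0` and so lies above `j_0`; then `j_0 ≤ j_t`,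
and the label of `⊥ ⋖ j_t` would be `0`. -/
theorem j_le_m_zero_of_mem_upLabels_bot (ht : t ∈ D.upLabels ⊥) (h0 : 0 < (t : ℕ)) :
    D.j t ≤ D.m ⟨0, by omega⟩ := by
  obtain ⟨z, hz, hl⟩ := mem_upLabels.1 ht
  obtain rfl : D.j t = z := by simpa using sup_j_eq_of_isLabel hD hz hl
  by_contra hjm
  have hj0 : D.j ⟨0, by omega⟩ ≤ D.j t := by
    rw [← inf_upLabels hD (D.j t)]
    refine Finset.le_inf fun s hs => D.j_le_m_of_lt ?_
    obtain ⟨c, hc, hlc⟩ := mem_upLabels.1 hs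
    have hs0 : s ≠ ⟨0, by omega⟩ := by
      rintro rfl
      exact hjm (le_m_of_isLabel hD hc hlc)
    exact Fin.lt_def.2 (Nat.pos_of_ne_zero fun h => hs0 (Fin.ext h))
  have := le_of_j_le_of_isLabel hD hz hl hj0 fun h => (D.j_irr _).ne_bot (le_bot_iff.1 h)
  simp only [Fin.le_def] at this
  omega

end Labels

section Restriction

variable {D : ExtremalChainData L n} {z : L}

theorem inf_x_eq_sup (i : Fin (n + 1)) :
    z ⊓ D.x i = ({t | (t : ℕ) < i ∧ D.j t ≤ z} : Finset (Fin n)).sup D.j := by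
  refine le_antisymm ?_ (Finset.sup_le fun t ht => ?_)
  · rw [← D.sup_jBelow (z ⊓ D.x i)]
    refine Finset.sup_mono fun t ht => ?_
    have ht' := le_inf_iff.1 (D.mem_jBelow.1 ht)
    simp only [mem_filter, mem_univ, true_and]
    exact ⟨not_le.1 fun h => D.j_not_le_x h ht'.2, ht'.1⟩
  · simp only [mem_filter, mem_univ, true_and] at ht
    exact le_inf ht.2 (D.j_le_x ht.1)

theorem inf_x_eq_inf (i : Fin (n + 1)) :
    z ⊓ D.x i = z ⊓ ({t | (i : ℕ) ≤ t ∧ D.j t ≤ z} : Finset (Fin n)).inf D.m := by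
  refine le_antisymm (inf_le_inf_left z (Finset.le_inf fun t ht => D.x_le_m ?_)) ?_
  · simp only [mem_filter, mem_univ, true_and] at ht
    exact ht.1
  · rw [← D.sup_jBelow (z ⊓ _)]
    refine Finset.sup_le fun s hs => ?_
    have hs' := le_inf_iff.1 (D.mem_jBelow.1 hs)
    refine le_inf hs'.1 (D.j_le_x (not_le.1 fun h => D.j_not_le_m s ?_))
    exact hs'.2.trans (Finset.inf_le (by simp [h, hs'.1]))

variable (D z) in
noncomputable def jBelowEmb : Fin (D.jBelow z).card ↪o Fin n := (D.jBelow z).orderEmbOfFin rfl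

theorem j_jBelowEmb_le (q : Fin (D.jBelow z).card) : D.j (D.jBelowEmb z q) ≤ z :=
  D.mem_jBelow.1 (orderEmbOfFin_mem _ _ q)

theorem exists_jBelowEmb_eq {t : Fin n} (ht : D.j t ≤ z) : ∃ q, D.jBelowEmb z q = t := by
  show t ∈ Set.range (D.jBelowEmb z)
  rw [jBelowEmb, range_orderEmbOfFin]
  exact D.mem_jBelow.2 ht

variable (D z) in
/-- The chain of `[⊥, z]` is `z ⊓ x_i` for `i` running through `jBelow z` in increasing order
and finally `n`: `z ⊓ x_•` grows exactly at those indices. -/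
noncomputable def restrictIdx (p : Fin ((D.jBelow z).card + 1)) : Fin (n + 1) :=
  if h : (p : ℕ) < (D.jBelow z).card then (D.jBelowEmb z ⟨p, h⟩).castSucc else Fin.last n

theorem restrictIdx_castSucc (q : Fin (D.jBelow z).card) :
    D.restrictIdx z q.castSucc = (D.jBelowEmb z q).castSucc := by
  simp [restrictIdx]

theorem jBelowEmb_lt_restrictIdx_iff (q : Fin (D.jBelow z).card) (p : Fin ((D.jBelow z).card + 1)) :
    (D.jBelowEmb z q : ℕ) < D.restrictIdx z p ↔ (q : ℕ) < p := by
  unfold restrictIdx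
  split_ifs with h
  · simp [Fin.lt_def]
  · simp only [Fin.val_last, Fin.is_lt, true_iff]
    omega

theorem filter_lt_restrictIdx (p : Fin ((D.jBelow z).card + 1)) :
    ({t | (t : ℕ) < D.restrictIdx z p ∧ D.j t ≤ z} : Finset (Fin n)) =
      ({q | (q : ℕ) < p} : Finset (Fin (D.jBelow z).card)).map (D.jBelowEmb z).toEmbedding := by
  ext t
  simp only [mem_filter, mem_univ, true_and, mem_map, RelEmbedding.coe_toEmbedding]
  constructor
  · rintro ⟨hlt, hz⟩
    obtain ⟨q, rfl⟩ := exists_jBelowEmb_eq hz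
    exact ⟨q, (jBelowEmb_lt_restrictIdx_iff q p).1 hlt, rfl⟩
  · rintro ⟨q, hq, rfl⟩
    exact ⟨(jBelowEmb_lt_restrictIdx_iff q p).2 hq, j_jBelowEmb_le q⟩

theorem filter_restrictIdx_le (p : Fin ((D.jBelow z).card + 1)) :
    ({t | (D.restrictIdx z p : ℕ) ≤ t ∧ D.j t ≤ z} : Finset (Fin n)) =
      ({q | (p : ℕ) ≤ q} : Finset (Fin (D.jBelow z).card)).map (D.jBelowEmb z).toEmbedding := by
  ext t
  simp only [mem_filter, mem_univ, true_and, mem_map, RelEmbedding.coe_toEmbedding]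
  constructor
  · rintro ⟨hle, hz⟩
    obtain ⟨q, rfl⟩ := exists_jBelowEmb_eq hz
    exact ⟨q, not_lt.1 fun h => (not_lt.2 hle) ((jBelowEmb_lt_restrictIdx_iff q p).2 h), rfl⟩
  · rintro ⟨q, hq, rfl⟩
    exact ⟨not_lt.1 fun h => (not_lt.2 hq) ((jBelowEmb_lt_restrictIdx_iff q p).1 h),
      j_jBelowEmb_le q⟩

theorem inf_x_restrictIdx_succ (q : Fin (D.jBelow z).card) :
    z ⊓ D.x (D.restrictIdx z q.succ) = z ⊓ D.x (D.jBelowEmb z q).succ := by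
  rw [inf_x_eq_sup, inf_x_eq_sup, filter_lt_restrictIdx]
  congr 1
  ext t
  simp only [mem_filter, mem_univ, true_and, mem_map, RelEmbedding.coe_toEmbedding,
    Fin.val_succ]
  constructor
  · rintro ⟨q', hq', rfl⟩
    refine ⟨?_, j_jBelowEmb_le q'⟩
    have h : q' ≤ q := Fin.le_def.2 (Nat.le_of_lt_succ hq')
    have := Fin.le_def.1 ((D.jBelowEmb z).monotone h)
    omega
  · rintro ⟨hlt, hz⟩
    obtain ⟨q', rfl⟩ := exists_jBelowEmb_eq hz
    refine ⟨q', ?_, rfl⟩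
    have h : D.jBelowEmb z q' ≤ D.jBelowEmb z q := Fin.le_def.2 (by omega)
    exact Nat.lt_succ_of_le (Fin.le_def.1 ((D.jBelowEmb z).le_iff_le.1 h))

variable (D z) in
noncomputable def restrictX (p : Fin ((D.jBelow z).card + 1)) : Set.Iic z :=
  ⟨z ⊓ D.x (D.restrictIdx z p), inf_le_left⟩

theorem coe_restrictX (p : Fin ((D.jBelow z).card + 1)) :
    (D.restrictX z p : L) = z ⊓ D.x (D.restrictIdx z p) := rfl

theorem coe_restrictX_eq_sup (p : Fin ((D.jBelow z).card + 1)) :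
    (D.restrictX z p : L) =
      ({q | (q : ℕ) < p} : Finset (Fin (D.jBelow z).card)).sup
        fun q => D.j (D.jBelowEmb z q) := by
  rw [coe_restrictX, inf_x_eq_sup, filter_lt_restrictIdx, sup_map]
  rfl

theorem coe_restrictX_eq_inf (p : Fin ((D.jBelow z).card + 1)) :
    (D.restrictX z p : L) =
      z ⊓ ({q | (p : ℕ) ≤ q} : Finset (Fin (D.jBelow z).card)).inf
        fun q => D.m (D.jBelowEmb z q) := by
  rw [coe_restrictX, inf_x_eq_inf, filter_restrictIdx_le, inf_map]
  rfl

theorem restrictX_strictMono : StrictMono (D.restrictX z) := by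
  intro p p' hpp'
  have hp : (p : ℕ) < (D.jBelow z).card := by omega
  refine lt_of_le_not_ge ?_ fun hle => ?_
  · rw [← Subtype.coe_le_coe, coe_restrictX_eq_sup, coe_restrictX_eq_sup]
    exact Finset.sup_mono fun q hq => by simp only [mem_filter, mem_univ, true_and] at hq ⊢; omega
  · have hj : D.j (D.jBelowEmb z ⟨p, hp⟩) ≤ D.restrictX z p' := by
      rw [coe_restrictX_eq_sup]
      exact Finset.le_sup (f := fun q => D.j (D.jBelowEmb z q)) (by simpa using hpp')
    have hidx : D.restrictIdx z p = (D.jBelowEmb z ⟨p, hp⟩).castSucc := by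
      simp [restrictIdx, hp]
    exact D.j_not_le_x (i := D.restrictIdx z p) (by simp [hidx]) <|
      (hj.trans (Subtype.coe_le_coe.2 hle)).trans (by rw [coe_restrictX, hidx]; exact inf_le_right)

theorem restrictX_zero : D.restrictX z 0 = ⊥ := by
  apply Subtype.ext
  rw [coe_restrictX_eq_sup]
  simp

theorem restrictX_last : D.restrictX z (Fin.last _) = ⊤ := by
  apply Subtype.ext
  simp [restrictX, restrictIdx, D.x_top]

theorem exists_separating_j {m : ℕ} {c : Fin (m + 1) → Set.Iic z} (hc : StrictMono c)
    (i : Fin m) : ∃ t ∈ D.jBelow z, D.j t ≤ c i.succ ∧ ¬ D.j t ≤ c i.castSucc := by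
  obtain ⟨t, ht, ht'⟩ := D.exists_j_le_not_le (a := c i.castSucc) (b := c i.succ)
    (Subtype.coe_le_coe.not.2 (hc i.castSucc_lt_succ).not_ge)
  exact ⟨t, D.mem_jBelow.2 (ht.trans (c i.succ).2), ht, ht'⟩

section

variable (hD : D.IsTrim)
include hD

theorem exists_eq_inf_m_of_infIrred {w : Set.Iic z} (hw : InfIrred w) :
    ∃ t ∈ D.jBelow z, (w : L) = z ⊓ D.m t := by
  obtain ⟨c, hwc, -⟩ := exists_covBy_le_of_lt hw.ne_top.lt_top
  have hwc' := Set.Iic.coe_covBy_coe.2 hwc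
  obtain ⟨t, ht⟩ := exists_isLabel hwc'
  refine ⟨t, D.mem_jBelow.2 ((j_le_of_isLabel hD hwc' ht).trans c.2), ?_⟩
  have hinf : (⟨z ⊓ D.m t, inf_le_left⟩ : Set.Iic z) ⊓ c = w := by
    apply Subtype.ext
    rw [Set.Iic.coe_inf, inf_right_comm, inf_eq_right.2 c.2]
    exact inf_m_eq_of_isLabel hD hwc' ht
  obtain h | h := hw.2 hinf
  · exact congrArg Subtype.val h.symm
  · exact absurd h hwc.lt.ne'

/-- The inf-irreducibles of `[⊥, z]` are among the `z ⊓ m_t`, and the chain `restrictX z`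
separates at least `#jBelow z` of them. -/
theorem infIrred_inf_m_and_injOn :
    (∀ t ∈ D.jBelow z, InfIrred (⟨z ⊓ D.m t, inf_le_left⟩ : Set.Iic z)) ∧
      Set.InjOn (fun t => (⟨z ⊓ D.m t, inf_le_left⟩ : Set.Iic z)) (D.jBelow z) := by
  set f : Fin n → Set.Iic z := fun t => ⟨z ⊓ D.m t, inf_le_left⟩
  have hsub : ({w | InfIrred w} : Finset (Set.Iic z)) ⊆ (D.jBelow z).image f := by
    intro w hw
    obtain ⟨t, ht, hwt⟩ := exists_eq_inf_m_of_infIrred hD (mem_filter.1 hw).2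
    exact mem_image.2 ⟨t, ht, Subtype.ext hwt.symm⟩
  have hcard : (D.jBelow z).card ≤ ({w | InfIrred w} : Finset (Set.Iic z)).card := by
    refine length_le_card_of_separating restrictX_strictMono.monotone _ (fun w a => ¬ a ≤ w)
      (fun _ _ _ h hab h' => h (hab.trans h')) fun i => ?_
    obtain ⟨w, hw, h₁, h₂⟩ := exists_infIrred_le_not_le
      (restrictX_strictMono (D := D) (z := z) i.castSucc_lt_succ).not_ge
    exact ⟨w, by simpa using hw, h₂, not_not.2 h₁⟩
  have heq := eq_of_subset_of_card_le hsub (card_image_le.trans hcard)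
  refine ⟨fun t ht => ?_, injOn_of_card_image_eq ?_⟩
  · have := mem_image_of_mem f ht
    rw [← heq] at this
    simpa using this
  · exact le_antisymm card_image_le (hcard.trans (card_le_card hsub))

end

variable (D) in
noncomputable def restrictIic (hD : D.IsTrim) (z : L) :
    ExtremalChainData (Set.Iic z) (D.jBelow z).card where
  x := D.restrictX z
  x_strictMono := restrictX_strictMono
  x_bot := restrictX_zero
  x_top := restrictX_last
  maxlen _ _ hc := length_le_card_of_separating hc.monotone (D.jBelow z)
    (fun t a => D.j t ≤ (a : L)) (fun _ _ _ h hab => h.trans hab) (exists_separating_j hc)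
  j q := ⟨D.j (D.jBelowEmb z q), j_jBelowEmb_le q⟩
  m q := ⟨z ⊓ D.m (D.jBelowEmb z q), inf_le_left⟩
  j_irr _ := Set.Iic.supIrred_coe_iff.1 (D.j_irr _)
  m_irr q := (infIrred_inf_m_and_injOn hD).1 _ (orderEmbOfFin_mem _ _ q)
  j_inj _ _ h := (D.jBelowEmb z).injective (D.j_inj (congrArg Subtype.val h))
  m_inj _ _ h := (D.jBelowEmb z).injective
    ((infIrred_inf_m_and_injOn hD).2 (orderEmbOfFin_mem _ _ _) (orderEmbOfFin_mem _ _ _) h)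
  j_surj a ha := by
    obtain ⟨t, ht⟩ := D.j_surj _ (Set.Iic.supIrred_coe_iff.2 ha)
    obtain ⟨q, rfl⟩ := exists_jBelowEmb_eq (ht ▸ a.2 : D.j t ≤ z)
    exact ⟨q, Subtype.ext ht⟩
  m_surj a ha := by
    obtain ⟨t, ht, hat⟩ := exists_eq_inf_m_of_infIrred hD ha
    obtain ⟨q, rfl⟩ := exists_jBelowEmb_eq (D.mem_jBelow.1 ht)
    exact ⟨q, Subtype.ext hat.symm⟩
  x_eq_sup p := by
    apply Subtype.ext
    rw [coe_restrictX_eq_sup, Set.Iic.coe_finset_sup]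
  x_eq_inf p := by
    apply Subtype.ext
    rw [coe_restrictX_eq_inf, Set.Iic.coe_finset_inf]
    exact le_antisymm
      (le_inf inf_le_left (Finset.le_inf fun q hq => le_inf inf_le_left
        (inf_le_right.trans (Finset.inf_le hq))))
      (inf_le_inf_left _ (Finset.inf_mono_fun fun _ _ => inf_le_right))

variable (hD : D.IsTrim)

theorem IsTrim.restrictIic (z : L) : (D.restrictIic hD z).IsTrim :=
  fun _ => (hD _).inf_Iic z

theorem restrictIic_j_le_m_iff (p q : Fin (D.jBelow z).card) :
    (D.restrictIic hD z).j p ≤ (D.restrictIic hD z).m q ↔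
      D.j (D.jBelowEmb z p) ≤ D.m (D.jBelowEmb z q) :=
  ⟨fun h => (Subtype.coe_le_coe.2 h).trans inf_le_right,
    fun h => Subtype.coe_le_coe.1 (le_inf (j_jBelowEmb_le p) h)⟩

theorem isLabel_restrictIic_iff {a b : Set.Iic z} (h : a ⋖ b) (q : Fin (D.jBelow z).card) :
    (D.restrictIic hD z).IsLabel a b q ↔ D.IsLabel a b (D.jBelowEmb z q) := by
  rw [isLabel_iff (hD.restrictIic z) h, isLabel_iff hD (Set.Iic.coe_covBy_coe.2 h)]
  change (b : L) ≤ (a : L) ⊔ z ⊓ D.x (D.restrictIdx z q.succ) ∧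
    ¬ (b : L) ≤ (a : L) ⊔ z ⊓ D.x (D.restrictIdx z q.castSucc) ↔ _
  rw [inf_x_restrictIdx_succ, restrictIdx_castSucc, le_sup_inf_x_iff hD a.2 b.2,
    le_sup_inf_x_iff hD a.2 b.2]

theorem mem_restrictIic_downLabels {a : Set.Iic z} {q : Fin (D.jBelow z).card} :
    q ∈ (D.restrictIic hD z).downLabels a ↔ D.jBelowEmb z q ∈ D.downLabels a := by
  rw [mem_downLabels, mem_downLabels]
  constructor
  · rintro ⟨y, hy, hl⟩
    exact ⟨y, Set.Iic.coe_covBy_coe.2 hy, (isLabel_restrictIic_iff hD hy q).1 hl⟩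
  · rintro ⟨y, hy, hl⟩
    have hy' : (⟨y, hy.le.trans a.2⟩ : Set.Iic z) ⋖ a := Set.Iic.coe_covBy_coe.1 hy
    exact ⟨_, hy', (isLabel_restrictIic_iff hD hy' q).2 hl⟩

theorem mem_restrictIic_upLabels {b : Set.Iic z} {q : Fin (D.jBelow z).card} :
    q ∈ (D.restrictIic hD z).upLabels b ↔ D.jBelowEmb z q ∈ D.upLabels b := by
  rw [mem_upLabels, mem_upLabels]
  constructor
  · rintro ⟨c, hc, hl⟩
    exact ⟨c, Set.Iic.coe_covBy_coe.2 hc, (isLabel_restrictIic_iff hD hc q).1 hl⟩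
  · rintro ⟨c, hc, hl⟩
    have hcz : c ≤ z := sup_j_eq_of_isLabel hD hc hl ▸ sup_le b.2 (j_jBelowEmb_le q)
    have hc' : b ⋖ (⟨c, hcz⟩ : Set.Iic z) := Set.Iic.coe_covBy_coe.1 hc
    exact ⟨_, hc', (isLabel_restrictIic_iff hD hc' q).2 hl⟩

end Restriction

section Independence

variable {D : ExtremalChainData L n}

variable (D) in
def IsIndependent (S : Finset (Fin n)) : Prop := ∀ s ∈ S, ∀ t ∈ S, ¬ D.galoisEdge s t

theorem isIndependent_iff {S : Finset (Fin n)} :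
    D.IsIndependent S ↔ ∀ s ∈ S, ∀ t ∈ S, s ≠ t → D.j s ≤ D.m t := by
  simp only [IsIndependent, galoisEdge, not_and', not_not]

theorem dual_isIndependent_map_rev_iff {S : Finset (Fin n)} :
    D.dual.IsIndependent (S.map Fin.revPerm.toEmbedding) ↔ D.IsIndependent S := by
  simp only [isIndependent_iff, mem_map_equiv, Fin.revPerm_symm, Fin.revPerm_apply, dual_j,
    dual_m, toDual_le_toDual]
  refine ⟨fun h s hs t ht hst => ?_,
    fun h s hs t ht hst => h _ ht _ hs (by simpa using hst.symm)⟩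
  simpa using h t.rev (by simpa using ht) s.rev (by simpa using hs) (by simpa using hst.symm)

section

variable (hD : D.IsTrim)
include hD

theorem isIndependent_downLabels_top_of_dual (h : D.dual.IsIndependent (D.dual.upLabels ⊥)) :
    D.IsIndependent (D.downLabels ⊤) := by
  rwa [← toDual_top, dual_upLabels hD, dual_isIndependent_map_rev_iff] at h

theorem upLabels_inf_of_dual
    (h : ∀ S, D.dual.IsIndependent S → D.dual.downLabels (S.sup D.dual.j) = S)
    {S : Finset (Fin n)} (hS : D.IsIndependent S) : D.upLabels (S.inf D.m) = S := by
  have := h _ (dual_isIndependent_map_rev_iff.2 hS)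
  rw [sup_map,
    show D.dual.j ∘ Fin.revPerm.toEmbedding = toDual ∘ D.m from funext fun t => by simp,
    ← Finset.toDual_inf, dual_downLabels hD] at this
  exact map_injective _ this

theorem isIndependent_upLabels_bot_of_restrictIic
    (ih : ∀ z, z ≠ ⊤ →
      (D.restrictIic hD z).IsIndependent ((D.restrictIic hD z).upLabels ⊥)) :
    D.IsIndependent (D.upLabels ⊥) := by
  refine isIndependent_iff.2 fun s hs t ht hst => ?_
  rcases lt_or_gt_of_ne hst with hlt | hlt
  · exact D.j_le_m_of_lt hlt
  -- `[⊥, j_s ⊔ j_t]` is smaller than `L` unless `j_s ⊔ j_t = ⊤`; then both lie below `m_0`.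
  by_cases htop : D.j s ⊔ D.j t = ⊤
  · have hs0 := j_le_m_zero_of_mem_upLabels_bot hD hs (Nat.zero_le _ |>.trans_lt hlt)
    obtain ht0 | ht0 := Nat.eq_zero_or_pos (t : ℕ)
    · rwa [show t = ⟨0, _⟩ from Fin.ext ht0]
    · exact absurd (top_le_iff.1 (htop ▸ sup_le hs0 (j_le_m_zero_of_mem_upLabels_bot hD ht ht0)))
        (D.m_irr _).ne_top
  · generalize hc : D.j s ⊔ D.j t = c at htop
    obtain ⟨p, rfl⟩ := exists_jBelowEmb_eq (hc ▸ le_sup_left : D.j s ≤ c)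
    obtain ⟨q, rfl⟩ := exists_jBelowEmb_eq (hc ▸ le_sup_right : D.j t ≤ c)
    exact (restrictIic_j_le_m_iff hD p q).1 (isIndependent_iff.1 (ih _ htop) p
      ((mem_restrictIic_upLabels hD).2 hs) q ((mem_restrictIic_upLabels hD).2 ht)
      (ne_of_apply_ne _ hst))

theorem downLabels_top_of_sup_eq_top (htop : D.IsIndependent (D.downLabels ⊤))
    {S : Finset (Fin n)} (hS : D.IsIndependent S) (hx : S.sup D.j = ⊤) :
    D.downLabels ⊤ = S := by
  rw [isIndependent_iff] at hS htop
  have hsub : S ⊆ D.downLabels ⊤ := fun s hs => by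
    have : D.m s ⊔ D.j s = ⊤ := top_le_iff.1 <| hx ▸ Finset.sup_le fun t ht =>
      if hts : t = s then hts ▸ le_sup_right else (hS t ht s hs hts).trans le_sup_left
    simpa [this] using mem_downLabels_m_sup_j hD s
  refine Subset.antisymm (fun t ht => not_not.1 fun htS => (D.m_irr t).ne_top ?_) hsub
  exact top_le_iff.1 <| hx ▸ Finset.sup_le fun s hs =>
    htop s (hsub hs) t ht fun h => htS (h ▸ hs)

theorem downLabels_sup_of_restrictIic (htop : D.IsIndependent (D.downLabels ⊤))
    (ih : ∀ z, z ≠ ⊤ → ∀ S, (D.restrictIic hD z).IsIndependent S →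
      (D.restrictIic hD z).downLabels (S.sup (D.restrictIic hD z).j) = S)
    {S : Finset (Fin n)} (hS : D.IsIndependent S) : D.downLabels (S.sup D.j) = S := by
  by_cases hx : S.sup D.j = ⊤
  · rw [hx, downLabels_top_of_sup_eq_top hD htop hS hx]
  generalize hxS : S.sup D.j = x at hx ⊢
  set S' : Finset (Fin (D.jBelow x).card) := {q | D.jBelowEmb x q ∈ S}
  have hmap : S'.map (D.jBelowEmb x).toEmbedding = S := by
    ext t
    simp only [S', mem_map, mem_filter, mem_univ, true_and, RelEmbedding.coe_toEmbedding]
    refine ⟨fun ⟨q, hq, hqt⟩ => hqt ▸ hq, fun ht => ?_⟩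
    obtain ⟨q, rfl⟩ := exists_jBelowEmb_eq (hxS ▸ le_sup ht : D.j t ≤ x)
    exact ⟨q, ht, rfl⟩
  have hS' : (D.restrictIic hD x).IsIndependent S' := isIndependent_iff.2 fun p hp q hq hpq =>
    (restrictIic_j_le_m_iff hD p q).2 (isIndependent_iff.1 hS _ (mem_filter.1 hp).2 _
      (mem_filter.1 hq).2 ((D.jBelowEmb x).injective.ne hpq))
  have hsup : S'.sup (D.restrictIic hD x).j = ⊤ := by
    apply Subtype.ext
    rw [Set.Iic.coe_finset_sup, Set.Iic.coe_top]
    conv_rhs => rw [← hxS, ← hmap, sup_map]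
    rfl
  have hdown := ih x hx S' hS'
  rw [hsup] at hdown
  ext t
  refine ⟨fun ht => ?_, fun ht => ?_⟩
  · obtain ⟨q, rfl⟩ := exists_jBelowEmb_eq (j_le_of_mem_downLabels hD ht)
    have hq := (mem_restrictIic_downLabels hD (a := ⊤)).2 ht
    rw [hdown] at hq
    exact (mem_filter.1 hq).2
  · obtain ⟨q, rfl⟩ := exists_jBelowEmb_eq (hxS ▸ le_sup ht : D.j t ≤ x)
    refine (mem_restrictIic_downLabels hD (a := ⊤)).1 ?_
    rw [hdown]
    exact mem_filter.2 ⟨mem_univ _, ht⟩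

end

universe u

theorem isIndependent_upLabels_bot_and_downLabels_sup (N : ℕ) :
    ∀ {L : Type u} [Lattice L] [Fintype L] [BoundedOrder L] {n : ℕ} (D : ExtremalChainData L n),
      D.IsTrim → Fintype.card L ≤ N → D.IsIndependent (D.upLabels ⊥) ∧
        ∀ S, D.IsIndependent S → D.downLabels (S.sup D.j) = S := by
  induction N with
  | zero =>
    intro L _ _ _ n D _ hcard
    exact absurd hcard Fintype.card_pos.not_ge
  | succ N ih =>
    intro L _ _ _ n D hD hcard
    have hbot : ∀ {M : Type u} [Lattice M] [Fintype M] [BoundedOrder M] {k : ℕ}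
        (E : ExtremalChainData M k) (hE : E.IsTrim), Fintype.card M ≤ N + 1 →
        E.IsIndependent (E.upLabels ⊥) := fun E hE hM =>
      isIndependent_upLabels_bot_of_restrictIic hE fun z hz =>
        (ih _ (hE.restrictIic z) (Nat.lt_succ_iff.1 ((card_Iic_lt_card hz).trans_le hM))).1
    -- `D(⊤)` is independent because `U(⊥)` is, in the order dual of the same size.
    refine ⟨hbot D hD hcard, fun S hS => downLabels_sup_of_restrictIic hD ?_ (fun z hz =>
      (ih _ (hD.restrictIic z) (Nat.lt_succ_iff.1 ((card_Iic_lt_card hz).trans_le hcard))).2) hS⟩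
    exact isIndependent_downLabels_top_of_dual hD
      (hbot D.dual hD.dual (by rwa [Fintype.card_orderDual]))

end Independence

section Rowmotion

variable {D : ExtremalChainData L n} (hD : D.IsTrim)
include hD

theorem isIndependent_upLabels_bot : D.IsIndependent (D.upLabels ⊥) :=
  (isIndependent_upLabels_bot_and_downLabels_sup _ D hD le_rfl).1

theorem downLabels_sup_j {S : Finset (Fin n)} (hS : D.IsIndependent S) :
    D.downLabels (S.sup D.j) = S :=
  (isIndependent_upLabels_bot_and_downLabels_sup _ D hD le_rfl).2 S hS

theorem isIndependent_downLabels_top : D.IsIndependent (D.downLabels ⊤) :=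
  isIndependent_downLabels_top_of_dual hD (isIndependent_upLabels_bot hD.dual)

theorem upLabels_inf_m {S : Finset (Fin n)} (hS : D.IsIndependent S) :
    D.upLabels (S.inf D.m) = S :=
  upLabels_inf_of_dual hD (fun _ => downLabels_sup_j hD.dual) hS

theorem isIndependent_downLabels (a : L) : D.IsIndependent (D.downLabels a) := by
  have htop := isIndependent_downLabels_top (hD.restrictIic a)
  refine isIndependent_iff.2 fun s hs t ht hst => ?_
  obtain ⟨p, rfl⟩ := exists_jBelowEmb_eq (j_le_of_mem_downLabels hD hs)
  obtain ⟨q, rfl⟩ := exists_jBelowEmb_eq (j_le_of_mem_downLabels hD ht)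
  exact (restrictIic_j_le_m_iff hD p q).1 (isIndependent_iff.1 htop p
    ((mem_restrictIic_downLabels hD).2 hs) q ((mem_restrictIic_downLabels hD).2 ht)
    (ne_of_apply_ne _ hst))

end Rowmotion

end ExtremalChainData

open ExtremalChainData

/-- In a trim lattice the collection of downward label sets equals the
collection of upward label sets; consequently rowmotion — sending `a` to the
unique `b` with `D^γ(a) = U^γ(b)` — is a well-defined bijection. -/
theorem rowmotion_well_defined {L : Type*} [Lattice L] [Fintype L] [BoundedOrder L]
    {n : ℕ} (D : ExtremalChainData L n) (hD : D.IsTrim) :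
    Set.range D.downLabels = Set.range D.upLabels ∧
    (∀ a : L, ∃! b : L, D.downLabels a = D.upLabels b) ∧
    ∃ row : L ≃ L, ∀ a : L, D.downLabels a = D.upLabels (row a) := by
  set row : L → L := fun a => (D.downLabels a).inf D.m
  have hrow (a : L) : D.upLabels (row a) = D.downLabels a :=
    upLabels_inf_m hD (isIndependent_downLabels hD a)
  have hbij : Function.Bijective row := Function.Injective.bijective_of_finite fun a b h =>
    downLabels_injective hD (by rw [← hrow, h, hrow])
  refine ⟨?_, fun a => ⟨row a, (hrow a).symm, fun b hb => upLabels_injective hD ?_⟩,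
    ⟨Equiv.ofBijective row hbij, fun a => (hrow a).symm⟩⟩
  · ext S
    refine ⟨fun ⟨a, ha⟩ => ⟨row a, (hrow a).trans ha⟩, fun ⟨b, hb⟩ => ?_⟩
    obtain ⟨a, rfl⟩ := hbij.2 b
    exact ⟨a, (hrow a).symm.trans hb⟩
  · rw [hrow, hb]
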